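/- arXiv:1602.04190 — 3 statements merged into one kernel-verified Lean document; each statement's English description precedes it below -/
import Mathlib

section
/- (Transitivity of transverse cones) Let C be a convex polyhedral cone in a Euclidean space V, let F' ⪯ F ⪯ C be faces. Then t(C,F) = t(t(C,F'), t(F,F')), where t(C,F) denotes the orthogonal projection of C onto lin(F)^⊥. -/
/-- The closed convex polyhedral cone generated by vectors `v 0, …, v (n-1)`. -/
def polyCone {V : Type*} [AddCommGroup V] [Module ℝ V] {n : ℕ} (v : Fin n → V) : Set V :=
  {x | ∃ c : Fin n → ℝ, (∀ i, 0 ≤ c i) ∧ x = ∑ i, c i • v i}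

/-- `C` is a (closed convex) polyhedral cone. -/
def IsPolyCone {V : Type*} [AddCommGroup V] [Module ℝ V] (C : Set V) : Prop :=
  ∃ (n : ℕ) (v : Fin n → V), C = polyCone v

/-- `F` is a face of the cone `C` (cut out by a supporting linear functional). -/
def IsFace {V : Type*} [AddCommGroup V] [Module ℝ V] (C F : Set V) : Prop :=
  ∃ ℓ : V →ₗ[ℝ] ℝ, (∀ x ∈ C, ℓ x ≤ 0) ∧ F = {x ∈ C | ℓ x = 0}

variable {V : Type*} [NormedAddCommGroup V] [InnerProductSpace ℝ V] [FiniteDimensional ℝ V]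

/-- The transverse cone `t(C,F)`: the image of `C` under the orthogonal projection onto
the orthogonal complement of the linear span of `F`. -/
noncomputable def tCone (C F : Set V) : Set V :=
  (fun x => (Submodule.orthogonalProjectionOnto (Submodule.span ℝ F)ᗮ x : V)) '' C

/-! Since `F' ⊆ F`, `K = span F'` lies in `W = span F`; let `P` be the projection onto `Kᗮ`.
The span of `t(F,F') = P F` is `P W`, and projecting `P y` onto `(P W)ᗮ` gives the projection
`z` of `y` onto `Wᗮ`: indeed `z ∈ Wᗮ ≤ (P W)ᗮ` since `P W ≤ W`, and
`P y - z = P y - P z = P (y - z) ∈ P W` since `Wᗮ ≤ Kᗮ`. -/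

namespace Submodule

variable {𝕜 E : Type*} [RCLike 𝕜] [NormedAddCommGroup E] [InnerProductSpace 𝕜 E]
  [FiniteDimensional 𝕜 E] {K W : Submodule 𝕜 E}

theorem map_starProjection_orthogonal_le (h : K ≤ W) :
    W.map (Kᗮ.starProjection : E →ₗ[𝕜] E) ≤ W := by
  rintro _ ⟨w, hw, rfl⟩
  rw [ContinuousLinearMap.coe_coe, starProjection_orthogonal_val]
  exact W.sub_mem hw (h (K.starProjection_apply_mem w))

theorem starProjection_orthogonal_starProjection_orthogonal_of_le (h : K ≤ W) (y : E) :
    Kᗮ.starProjection (Wᗮ.starProjection y) = Wᗮ.starProjection y :=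
  starProjection_eq_self_iff.mpr (orthogonal_le h (Wᗮ.starProjection_apply_mem y))

theorem starProjection_orthogonal_map_starProjection_orthogonal (h : K ≤ W) (y : E) :
    (W.map (Kᗮ.starProjection : E →ₗ[𝕜] E))ᗮ.starProjection (Kᗮ.starProjection y) =
      Wᗮ.starProjection y := by
  apply eq_starProjection_of_mem_orthogonal
  · exact orthogonal_le (map_starProjection_orthogonal_le h) (Wᗮ.starProjection_apply_mem y)
  · have hsplit : Kᗮ.starProjection y - Wᗮ.starProjection y
        = Kᗮ.starProjection (W.starProjection y) := by
      conv_lhs => rw [← starProjection_orthogonal_starProjection_orthogonal_of_le h y]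
      rw [← map_sub, W.starProjection_orthogonal_val y, sub_sub_cancel]
    rw [orthogonal_orthogonal, hsplit]
    exact mem_map_of_mem (W.starProjection_apply_mem y)

end Submodule

open Submodule

theorem IsFace.subset {E : Type*} [AddCommGroup E] [Module ℝ E] {C F : Set E} (h : IsFace C F) :
    F ⊆ C := by
  obtain ⟨ℓ, -, rfl⟩ := h
  exact fun x hx => hx.1

theorem tCone_eq_image_starProjection (C F : Set V) :
    tCone C F = (span ℝ F)ᗮ.starProjection '' C :=
  rfl

theorem span_tCone (F F' : Set V) :
    span ℝ (tCone F F') = (span ℝ F).map ((span ℝ F')ᗮ.starProjection : V →ₗ[ℝ] V) := by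
  rw [tCone_eq_image_starProjection]
  exact span_image ((span ℝ F')ᗮ.starProjection : V →ₗ[ℝ] V)

theorem tCone_tCone_of_subset (C : Set V) {F F' : Set V} (h : F' ⊆ F) :
    tCone (tCone C F') (tCone F F') = tCone C F := by
  rw [tCone_eq_image_starProjection (tCone C F'), span_tCone, tCone_eq_image_starProjection C F',
    tCone_eq_image_starProjection C F, Set.image_image]
  exact Set.image_congr fun y _ =>
    starProjection_orthogonal_map_starProjection_orthogonal (span_mono h) y

theorem tCone_trans_general (C F F' : Set V)
    (hF' : IsFace F F') :
    tCone C F = tCone (tCone C F') (tCone F F') :=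
  (tCone_tCone_of_subset C hF'.subset).symm

/-- transitivity of transverse cones: if `F' ⪯ F ⪯ C` are faces of a
convex polyhedral cone `C`, then `t(C,F) = t(t(C,F'), t(F,F'))`. -/
theorem tCone_trans (C F F' : Set V) (hC : IsPolyCone C)
    (hF : IsFace C F) (hF' : IsFace F F') :
    tCone C F = tCone (tCone C F') (tCone F F') :=
  tCone_trans_general C F F' hF'
end

section
/- Write e^ε/(1−e^ε) = −1/ε + h(ε) where h is holomorphic near 0. Then h(0) = −1/2 and h'(0) = −1/12. Consequently the renormalised double zeta value at (0,0) obtained from the holomorphic projection of the Chen-cone exponential sum satisfies ζ(0,0) = −(3/2)h'(0) + h(0)² = 3/8. -/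
/-!
Write `Rₙ(x) = (eˣ - ∑_{k<n} xᵏ/k!) / xⁿ`. Each `Rₙ` tends to `1/n!` at `0`: L'Hôpital
reduces `Rₙ₊₁` to `Rₙ / (n + 1)`, since the partial sums of the exponential series
differentiate into each other. For `x ≠ 0` one has the identities
`h(x) = -1 + R₂(x) / R₁(x)` and `(h(x) + 1/2) / x = (R₃(x) - 1/4 - x R₃(x) / 2) / R₁(x)`,
which give `h(0) = -1/2` and `h'(0) = 1/6 - 1/4 = -1/12`; the value `3/8` is then arithmetic.
-/

open Filter Real
open scoped Nat Topology

theorem hasDerivAt_sum_range_succ_pow_div_factorial (n : ℕ) (x : ℝ) :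
    HasDerivAt (fun y : ℝ => ∑ k ∈ Finset.range (n + 1), y ^ k / k !)
      (∑ k ∈ Finset.range n, x ^ k / k !) x := by
  have hterm (k : ℕ) : HasDerivAt (fun y : ℝ => y ^ (k + 1) / (k + 1)!) (x ^ k / k !) x := by
    refine ((hasDerivAt_pow (k + 1) x).div_const ((k + 1)! : ℝ)).congr_deriv ?_
    rw [Nat.add_sub_cancel, Nat.factorial_succ]
    push_cast
    field_simp
  simp only [Finset.sum_range_succ']
  simpa using HasDerivAt.fun_sum fun k _ => hterm k

theorem tendsto_exp_sub_sum_range_div_pow (n : ℕ) :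
    Tendsto (fun x : ℝ => (exp x - ∑ k ∈ Finset.range n, x ^ k / k !) / x ^ n) (𝓝[≠] 0)
      (𝓝 (1 / n !)) := by
  induction n with
  | zero => simpa using (continuous_exp.tendsto 0).mono_left nhdsWithin_le_nhds
  | succ n ih =>
    apply HasDerivAt.lhopital_zero_nhdsNE
        (f' := fun x : ℝ => exp x - ∑ k ∈ Finset.range n, x ^ k / k !)
        (g' := fun x : ℝ => (n + 1) * x ^ n)
    · exact .of_forall fun x =>
        (hasDerivAt_exp x).sub (hasDerivAt_sum_range_succ_pow_div_factorial n x)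
    · exact .of_forall fun x => by simpa using hasDerivAt_pow (n + 1) x
    · filter_upwards [self_mem_nhdsWithin] with x hx
      exact mul_ne_zero (by positivity) (pow_ne_zero n hx)
    · have hcont : Continuous fun x : ℝ => exp x - ∑ k ∈ Finset.range (n + 1), x ^ k / k ! := by
        fun_prop
      simpa [Finset.sum_range_succ'] using hcont.tendsto 0 |>.mono_left nhdsWithin_le_nhds
    · simpa using ((continuous_pow (n + 1)).tendsto (0 : ℝ)).mono_left nhdsWithin_le_nhds
    · convert ih.div_const ((n : ℝ) + 1) using 1
      · ext x
        rw [mul_comm, div_div]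
      · push_cast [Nat.factorial_succ]
        field_simp

theorem tendsto_exp_div_one_sub_exp_add_inv :
    Tendsto (fun x : ℝ => exp x / (1 - exp x) + 1 / x) (𝓝[≠] 0) (𝓝 (-1 / 2)) := by
  rw [show (-1 / 2 : ℝ) = -1 + 1 / (2 ! : ℕ) / (1 / (1 ! : ℕ)) by norm_num [Nat.factorial]]
  refine Tendsto.congr' ?_ <| ((tendsto_exp_sub_sum_range_div_pow 2).div
    (tendsto_exp_sub_sum_range_div_pow 1) (by norm_num)).const_add (-1)
  refine eventually_nhdsWithin_of_forall fun x (hx : x ≠ 0) => ?_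
  have he : exp x ≠ 1 := (Real.exp_eq_one_iff x).not.2 hx
  have he₁ : exp x - 1 ≠ 0 := sub_ne_zero.2 he
  have he₂ : 1 - exp x ≠ 0 := sub_ne_zero.2 he.symm
  simp only [Finset.sum_range_succ, Finset.sum_range_zero, zero_add, Nat.factorial, Pi.div_apply]
  push_cast
  field_simp
  ring

theorem tendsto_exp_div_one_sub_exp_add_inv_slope :
    Tendsto (fun x : ℝ => (exp x / (1 - exp x) + 1 / x - (-1 / 2)) / x) (𝓝[≠] 0)
      (𝓝 (-1 / 12)) := by
  have hR₃ := tendsto_exp_sub_sum_range_div_pow 3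
  have hxR₃ := (tendsto_nhdsWithin_of_tendsto_nhds tendsto_id).mul hR₃
  rw [show (-1 / 12 : ℝ) = (1 / (3 ! : ℕ) - 1 / 4 - 0 * (1 / (3 ! : ℕ)) / 2) / (1 / (1 ! : ℕ)) by
    norm_num [Nat.factorial]]
  refine Tendsto.congr' ?_ <| ((hR₃.sub_const (1 / 4)).sub (hxR₃.div_const 2)).div
    (tendsto_exp_sub_sum_range_div_pow 1) (by norm_num)
  refine eventually_nhdsWithin_of_forall fun x (hx : x ≠ 0) => ?_
  have he : exp x ≠ 1 := (Real.exp_eq_one_iff x).not.2 hx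
  have he₁ : exp x - 1 ≠ 0 := sub_ne_zero.2 he
  have he₂ : 1 - exp x ≠ 0 := sub_ne_zero.2 he.symm
  simp only [Finset.sum_range_succ, Finset.sum_range_zero, zero_add, Nat.factorial, Pi.div_apply,
    id_eq]
  push_cast
  field_simp
  ring

/-- writing `e^ε/(1-e^ε) = -1/ε + h(ε)` with `h` holomorphic near `0`,
one has `h(0) = -1/2` and `h'(0) = -1/12`; consequently the renormalised double zeta
value at `(0,0)` obtained from the holomorphic projection of the Chen-cone exponential
sum, evaluated along any direction `(a₁, a₂)`, equals
`-(3/2)·h'(0) + h(0)² = 3/8`, independently of `a₁, a₂`. -/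
theorem renormalised_zeta_zero_zero :
    Tendsto (fun ε : ℝ => Real.exp ε / (1 - Real.exp ε) + 1 / ε)
      (nhdsWithin 0 {0}ᶜ) (nhds (-1/2)) ∧
    Tendsto (fun ε : ℝ => (Real.exp ε / (1 - Real.exp ε) + 1 / ε - (-1/2)) / ε)
      (nhdsWithin 0 {0}ᶜ) (nhds (-1/12)) ∧
    (∀ a₁ a₂ : ℝ, a₁ ≠ 0 → a₁ + a₂ ≠ 0 →
      -(((a₁ + a₂) - a₂) / a₁) * (-1/12 : ℝ)
        - ((a₁ - (a₁ - a₂) / 2) / (a₁ + a₂)) * (-1/12)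
        + (-1/2 : ℝ) ^ 2 = 3/8) ∧
    (-(3/2 : ℝ)) * (-1/12) + (-1/2 : ℝ) ^ 2 = 3/8 :=
  ⟨tendsto_exp_div_one_sub_exp_add_inv, tendsto_exp_div_one_sub_exp_add_inv_slope,
    fun _ _ h₁ h₁₂ => by field_simp; ring, by norm_num⟩
end

section
/- Let (D, Λ_C) be a simplicial lattice cone with primary generators v_1,…,v_n that is not smooth. Then there exists a nonzero vector v = Σ_i c_i v_i ∈ Λ_C with all c_i ∈ [0,1) rational. Moreover, replacing any generator v_j with c_j ≠ 0 by v in D yields a cone D_j with w_{D_j} = c_j · w_D < w_D, where w_D is the absolute value of the determinant of the coordinates of v_1,…,v_n in any lattice basis of Λ_C. -/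
/-- A lattice cone `(C, Λ)` is smooth if the monoid `Λ ∩ C` has a monoid basis of
linearly independent lattice vectors. -/
def IsSmoothLatticeCone {k : ℕ} (C : Set (Fin k → ℝ)) (Λ : AddSubgroup (Fin k → ℝ)) : Prop :=
  ∃ (l : ℕ) (w : Fin l → (Fin k → ℝ)), LinearIndependent ℝ w ∧ (∀ i, w i ∈ Λ) ∧
    (Λ : Set (Fin k → ℝ)) ∩ C = {x | ∃ c : Fin l → ℕ, x = ∑ i, (c i : ℝ) • w i}

/-- `u` is a lattice basis of `Λ`. -/
def IsLatBasis {n : ℕ} (Λ : AddSubgroup (Fin n → ℝ)) (u : Fin n → (Fin n → ℝ)) : Prop :=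
  LinearIndependent ℝ u ∧ (∀ j, u j ∈ Λ) ∧
    ∀ x, x ∈ Λ ↔ ∃ m : Fin n → ℤ, x = ∑ j, (m j : ℝ) • u j

lemma exists_box_point {n : ℕ} (Λ : AddSubgroup (Fin n → ℝ)) (v : Fin n → (Fin n → ℝ))
    (hv : LinearIndependent ℝ v) (hvΛ : ∀ i, v i ∈ Λ)
    (hns : ¬ IsSmoothLatticeCone (polyCone v) Λ) :
    ∃ c : Fin n → ℝ, (∀ i, 0 ≤ c i ∧ c i < 1) ∧ (∑ i, c i • v i) ∈ Λ ∧
      (∑ i, c i • v i) ≠ 0 := by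
  by_contra h
  push_neg at h
  apply hns
  refine ⟨n, v, hv, hvΛ, ?_⟩
  ext x
  constructor
  · rintro ⟨hxΛ, t, ht0, rfl⟩
    have hfract : (∑ i, Int.fract (t i) • v i) ∈ Λ := by
      have : (∑ i, Int.fract (t i) • v i) =
          (∑ i, t i • v i) - ∑ i, (⌊t i⌋ : ℝ) • v i := by
        rw [← Finset.sum_sub_distrib]
        congr 1; ext i; rw [← sub_smul]; rfl
      rw [this]
      exact sub_mem hxΛ (sum_mem (fun i _ => by
        rw [Int.cast_smul_eq_zsmul ℝ]  -- might need Int.cast_smul_eq_zsmul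
        exact zsmul_mem (hvΛ i) _))
    have hz : (∑ i, Int.fract (t i) • v i) = 0 :=
      h _ (fun i => ⟨Int.fract_nonneg _, Int.fract_lt_one _⟩) hfract
    have hall : ∀ i, Int.fract (t i) = 0 := by
      exact Fintype.linearIndependent_iff.mp hv _ hz
    refine ⟨fun i => (⌊t i⌋).toNat, Finset.sum_congr rfl (fun i _ => ?_)⟩
    have h1 : (⌊t i⌋ : ℝ) = t i := by
      have := hall i; unfold Int.fract at this; linarith
    have h2 : (0:ℤ) ≤ ⌊t i⌋ := by
      have := ht0 i; rw [← h1] at this; exact_mod_cast this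
    congr 1
    rw [← h1]
    exact_mod_cast (Int.toNat_of_nonneg h2).symm
  · rintro ⟨c, rfl⟩
    constructor
    · exact sum_mem (fun i _ => by
        rw [Nat.cast_smul_eq_nsmul ℝ]
        exact nsmul_mem (hvΛ i) _)
    · exact ⟨fun i => (c i : ℝ), fun i => by positivity, rfl⟩


/-- if a simplicial lattice cone `(D, Λ)` with primary generators
`v₁,…,vₙ` is not smooth, then there is a nonzero `v = Σ cᵢ vᵢ ∈ Λ` with rational
coefficients `cᵢ ∈ [0,1)`; moreover replacing any generator `v_j` with `c_j ≠ 0` by `v`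
yields a cone `D_j` with `w_{D_j} = c_j · w_D < w_D`. -/
theorem subdivision_vector_decreases_wdet {n : ℕ}
    (Λ : AddSubgroup (Fin n → ℝ)) (v : Fin n → (Fin n → ℝ))
    (hv : LinearIndependent ℝ v) (hvΛ : ∀ i, v i ∈ Λ)
    (hprim : ∀ i, ¬ ∃ r : ℝ, 0 < r ∧ r < 1 ∧ r • v i ∈ Λ)
    (hns : ¬ IsSmoothLatticeCone (polyCone v) Λ)
    (u : Fin n → (Fin n → ℝ)) (hu : IsLatBasis Λ u)
    (a : Matrix (Fin n) (Fin n) ℤ) (ha : ∀ i, v i = ∑ j, (a i j : ℝ) • u j) :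
    ∃ c : Fin n → ℝ,
      (∀ i, 0 ≤ c i ∧ c i < 1 ∧ ∃ q : ℚ, c i = (q : ℝ)) ∧
      (∑ i, c i • v i) ∈ Λ ∧ (∑ i, c i • v i) ≠ 0 ∧
      ∀ j, c j ≠ 0 → ∃ b : Matrix (Fin n) (Fin n) ℤ,
        (∀ i, Function.update v j (∑ i, c i • v i) i = ∑ l, (b i l : ℝ) • u l) ∧
        |(b.det : ℝ)| = c j * |(a.det : ℝ)| ∧ b.det.natAbs < a.det.natAbs := by
  classical
  obtain ⟨hu_li, hu_mem, hu_span⟩ := hu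
  obtain ⟨c, hc01, hxΛ, hxne⟩ := exists_box_point Λ v hv hvΛ hns
  classical
  set aR : Matrix (Fin n) (Fin n) ℝ := a.map (Int.cast : ℤ → ℝ) with haR
  have key : ∀ g : Fin n → ℝ, ∑ i, g i • v i = ∑ l, (Matrix.vecMul g aR) l • u l := by
    intro g
    calc ∑ i, g i • v i = ∑ i, ∑ l, (g i * (a i l : ℝ)) • u l := by
          simp_rw [ha, Finset.smul_sum, smul_smul]
      _ = ∑ l, (∑ i, g i * (a i l : ℝ)) • u l := by
          rw [Finset.sum_comm]; simp_rw [Finset.sum_smul]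
      _ = _ := by
          simp [Matrix.vecMul, dotProduct, haR, Matrix.map_apply]
  have hker : ∀ g : Fin n → ℝ, Matrix.vecMul g aR = 0 → g = 0 := by
    intro g hg
    have h0 : ∑ i, g i • v i = 0 := by
      rw [key, hg]; simp
    funext i
    exact Fintype.linearIndependent_iff.mp hv g h0 i
  have hdetR : aR.det = ((a.det : ℝ)) := ((Int.castRingHom ℝ).map_det a).symm
  have hdet : a.det ≠ 0 := by
    intro h0
    have hz : aR.det = 0 := by rw [hdetR, h0]; simp
    obtain ⟨g, hg0, hg⟩ := Matrix.exists_vecMul_eq_zero_iff.mpr hz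
    exact hg0 (hker g hg)
  obtain ⟨m, hm⟩ := (hu_span _).mp hxΛ
  have hcm : Matrix.vecMul c aR = fun l => (m l : ℝ) := by
    have hdiff : ∑ l, ((Matrix.vecMul c aR) l - (m l : ℝ)) • u l = 0 := by
      simp_rw [sub_smul, Finset.sum_sub_distrib]
      rw [← key, ← hm, sub_self]
    funext l
    have := Fintype.linearIndependent_iff.mp hu_li _ hdiff l
    linarith [this]
  -- rationality
  set aQ : Matrix (Fin n) (Fin n) ℚ := a.map (Int.cast : ℤ → ℚ) with haQ
  have hdetQ : aQ.det = ((a.det : ℚ)) := ((Int.castRingHom ℚ).map_det a).symm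
  have hdetQ0 : IsUnit aQ.det := by
    rw [hdetQ]; exact isUnit_iff_ne_zero.mpr (by exact_mod_cast hdet)
  set cQ : Fin n → ℚ := Matrix.vecMul (fun l => (m l : ℚ)) aQ⁻¹ with hcQdef
  have hcQ : Matrix.vecMul cQ aQ = fun l => (m l : ℚ) := by
    rw [hcQdef, Matrix.vecMul_vecMul, Matrix.nonsing_inv_mul _ hdetQ0, Matrix.vecMul_one]
  have hcastQ : Matrix.vecMul (fun i => ((cQ i : ℝ))) aR = fun l => (m l : ℝ) := by
    funext l
    have h1 := congrArg (Rat.cast : ℚ → ℝ) (congrFun hcQ l)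
    simp only [Matrix.vecMul, dotProduct, haQ, haR, Matrix.map_apply] at h1 ⊢
    push_cast at h1
    exact h1
  have hceq : c = fun i => ((cQ i : ℝ)) := by
    have hsub : Matrix.vecMul (c - fun i => ((cQ i : ℝ))) aR = 0 := by
      rw [Matrix.sub_vecMul, hcm, hcastQ, sub_self]
    have := hker _ hsub
    funext i
    have := congrFun this i
    simpa [sub_eq_zero] using this
  refine ⟨c, fun i => ⟨(hc01 i).1, (hc01 i).2, cQ i, congrFun hceq i⟩, hxΛ, hxne, ?_⟩
  intro j hcj
  have hbmap : (a.updateRow j m).map (Int.cast : ℤ → ℝ) =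
      aR.updateRow j (fun l => (m l : ℝ)) := by
    ext i l
    by_cases hij : i = j
    · subst hij; simp [Matrix.map_apply]
    · simp [Matrix.map_apply, Matrix.updateRow_ne hij, haR]
  have hrow : (fun l => (m l : ℝ)) = ∑ k, c k • aR k := by
    rw [← hcm]
    funext l
    simp [Matrix.vecMul, dotProduct, Finset.sum_apply]
  have hbdet : (((a.updateRow j m).det : ℝ)) = c j * ((a.det : ℝ)) := by
    have h1 : (((a.updateRow j m).det : ℝ)) =
        ((a.updateRow j m).map (Int.cast : ℤ → ℝ)).det :=
      (Int.castRingHom ℝ).map_det _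
    rw [h1, hbmap, hrow, Matrix.det_updateRow_sum, smul_eq_mul, hdetR]
  refine ⟨a.updateRow j m, ?_, ?_, ?_⟩
  · intro i
    by_cases hij : i = j
    · subst hij
      simp only [Function.update_self, Matrix.updateRow_self]
      exact hm
    · simp only [Function.update_of_ne hij, Matrix.updateRow_ne hij]
      exact ha i
  · rw [hbdet, abs_mul, abs_of_nonneg (hc01 j).1]
  · have hlt : |(((a.updateRow j m).det : ℝ))| < |((a.det : ℝ))| := by
      rw [hbdet, abs_mul, abs_of_nonneg (hc01 j).1]
      have hpos : 0 < |((a.det : ℝ))| := abs_pos.mpr (by exact_mod_cast hdet)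
      exact mul_lt_of_lt_one_left hpos (hc01 j).2
    have hint : |(a.updateRow j m).det| < |a.det| := by exact_mod_cast hlt
    rw [Int.abs_eq_natAbs, Int.abs_eq_natAbs] at hint
    exact_mod_cast hint
end
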